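/- arXiv:2309.01059 — 3 statements merged into one kernel-verified Lean document; each statement's English description precedes it below -/
import Mathlib

section
/- Let F be the function field of the elliptic curve E : v^2 = u^3 + 1 over ℚ. The rational function 1 - v has valuation (order of vanishing) 3 at the point (0, 1), valuation -3 at the point at infinity, and valuation 0 at every other closed point; equivalently div(1 - v) = 3[(0,1)] - 3[∞]. -/
open Polynomial WeierstrassCurve
open scoped Pointwise

/-- The elliptic curve `v² = u³ + 1` of conductor 36 over `ℚ`. -/
noncomputable def E36 : Affine ℚ := { a₁ := 0, a₂ := 0, a₃ := 0, a₄ := 0, a₆ := 1 }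

/-- The function `1 - v` in the coordinate ring `ℚ[E] = ℚ[u,v]/(v² - u³ - 1)`
(here the outer variable is `v` and the inner one is `u`). -/
noncomputable def oneSubV : E36.CoordinateRing :=
  AdjoinRoot.mk E36.polynomial (1 - X)

local notation "mkE" => AdjoinRoot.mk E36.polynomial

lemma E36_poly : E36.polynomial = X ^ 2 - C (X ^ 3 + 1) := by
  rw [Affine.polynomial]; simp [E36]

/-- `div(1 - v) = 3[(0,1)] - 3[∞]` on `v² = u³ + 1`: in the coordinate ring the
ideal generated by `1 - v` is exactly the cube of the maximal ideal of the point
`(0, 1)` (so `1 - v` has valuation 3 at `(0,1)` and valuation 0 at every other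
affine point), and the total pole order at the point at infinity — the degree of
the norm of `1 - v` down to `ℚ[u]` — is 3. -/
theorem divisor_one_sub_v :
    Ideal.span {oneSubV} = (Affine.CoordinateRing.XYIdeal E36 0 (C 1)) ^ 3 ∧
    (Algebra.norm ℚ[X] oneSubV).natDegree = 3 := by
  constructor
  · set A := mkE (C X) with hA
    set B := mkE (X - 1) with hB
    have hI : Affine.CoordinateRing.XYIdeal E36 0 (C 1) = Ideal.span {A, B} := by
      rw [Affine.CoordinateRing.XYIdeal, Affine.CoordinateRing.XClass,
        Affine.CoordinateRing.YClass]
      norm_num [hA, hB]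
    have hone : Ideal.span {oneSubV} = Ideal.span {B} := by
      have : oneSubV = -B := by
        rw [hB, oneSubV, ← map_neg]; norm_num
      rw [this, Ideal.span_singleton_neg]
    have cube_eq : A ^ 3 = mkE (X + 1) * B := by
      rw [hA, hB, ← map_pow, ← map_mul, AdjoinRoot.mk_eq_mk, E36_poly]
      refine ⟨-1, ?_⟩
      simp only [map_add, map_pow, map_one]
      ring
    rw [hone, hI]
    apply le_antisymm
    · -- B ∈ span{A,B}^3
      rw [Ideal.span_le, Set.singleton_subset_iff]
      have hA3 : A ^ 3 ∈ Ideal.span {A, B} ^ 3 :=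
        Ideal.pow_mem_pow (Ideal.subset_span (by simp)) 3
      have hB3 : B ^ 3 ∈ Ideal.span {A, B} ^ 3 :=
        Ideal.pow_mem_pow (Ideal.subset_span (by simp)) 3
      have key : (4 : E36.CoordinateRing) * B = (mkE (X + 1) - 2 * B) * A ^ 3 + B ^ 3 := by
        rw [hA, hB]
        simp only [← map_ofNat mkE 4, ← map_ofNat mkE 2, ← map_pow, ← map_mul, ← map_sub,
          ← map_add]
        rw [AdjoinRoot.mk_eq_mk, E36_poly]
        refine ⟨-(X - 3), ?_⟩
        simp only [map_add, map_pow, map_one]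
        ring
      have h4B : (4 : E36.CoordinateRing) * B ∈ Ideal.span {A, B} ^ 3 := by
        rw [key]
        exact Ideal.add_mem _ (Ideal.mul_mem_left _ _ hA3) hB3
      have hinv : mkE (C (C (4⁻¹ : ℚ))) * ((4 : E36.CoordinateRing) * B) = B := by
        rw [hB, ← map_ofNat mkE 4, ← map_mul, ← map_mul]
        congr 1
        have h4 : (4 : ℚ[X][X]) = C (C (4 : ℚ)) := by rw [map_ofNat, map_ofNat]
        rw [h4, ← mul_assoc, ← C_mul, ← C_mul]
        norm_num
      have := Ideal.mul_mem_left _ (mkE (C (C (4⁻¹ : ℚ)))) h4B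
      rwa [hinv] at this
    · -- span{A,B}^3 ≤ span{B}
      have hcube : Ideal.span {A, B} ^ 3 =
          Ideal.span (({A, B} : Set _) * (({A, B} : Set _) * ({A, B} : Set _))) := by
        rw [pow_succ, pow_two, mul_comm, Ideal.span_mul_span', Ideal.span_mul_span']
      rw [hcube, Ideal.span_le]
      rintro x hx
      rw [Set.mem_mul] at hx
      obtain ⟨a, ha, y, hy, rfl⟩ := hx
      rw [Set.mem_mul] at hy
      obtain ⟨b, hb, c, hc, rfl⟩ := hy
      simp only [Set.mem_insert_iff, Set.mem_singleton_iff] at ha hb hc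
      have hBmem : ∀ z : E36.CoordinateRing, z * B ∈ Ideal.span {B} := fun z =>
        Ideal.mul_mem_left _ _ (Ideal.subset_span rfl)
      rcases hc with rfl | rfl
      · rcases hb with rfl | rfl
        · rcases ha with rfl | rfl
          · have h3 : A * (A * A) = mkE (X + 1) * B := by rw [← cube_eq]; ring
            exact h3 ▸ hBmem _
          · simpa [mul_comm, mul_assoc, mul_left_comm] using hBmem (A * A)
        · simpa [mul_comm, mul_assoc, mul_left_comm] using hBmem (a * A)
      · simpa [mul_comm, mul_assoc, mul_left_comm] using hBmem (a * b)
  · have hrep : oneSubV = (1 : ℚ[X]) • (1 : E36.CoordinateRing) +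
        (-1 : ℚ[X]) • AdjoinRoot.mk E36.polynomial X := by
      rw [one_smul, AdjoinRoot.smul_mk, oneSubV, ← map_one mkE, ← map_add]
      congr 1
      simp [Polynomial.smul_eq_C_mul]
      ring
    rw [hrep, Affine.CoordinateRing.norm_smul_basis]
    simp [E36]
end

section
/- Define F̃(α, β) = (Γ(α)Γ(β)/Γ(α+β))^2 · ₃F₂(α, β, α+β-1; α+β, α+β; 1) for α, β > 0. Then F̃(1/2, 1/3) > F̃(1/2, 2/3); in particular F̃(1/2,1/3) - F̃(1/2,2/3) > 0. -/
open Real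

/-- `F̃(α, β) = (Γ(α)Γ(β)/Γ(α+β))² · ₃F₂(α, β, α+β-1; α+β, α+β; 1)`. -/
noncomputable def Ftilde (α β : ℝ) : ℝ :=
  (Gamma α * Gamma β / Gamma (α + β)) ^ 2 *
    ∑' n : ℕ,
      (ascPochhammer ℝ n).eval α * (ascPochhammer ℝ n).eval β *
          (ascPochhammer ℝ n).eval (α + β - 1) /
        ((ascPochhammer ℝ n).eval (α + β) * (ascPochhammer ℝ n).eval (α + β) *
          (n.factorial : ℝ))

namespace FtildeAux

/-- The general term of the hypergeometric series. -/
noncomputable def T (α β : ℝ) (n : ℕ) : ℝ :=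
  (ascPochhammer ℝ n).eval α * (ascPochhammer ℝ n).eval β *
      (ascPochhammer ℝ n).eval (α + β - 1) /
    ((ascPochhammer ℝ n).eval (α + β) * (ascPochhammer ℝ n).eval (α + β) *
      (n.factorial : ℝ))

lemma Ftilde_eq (α β : ℝ) :
    Ftilde α β = (Gamma α * Gamma β / Gamma (α + β)) ^ 2 * ∑' n, T α β n := rfl

lemma poch_pos {x : ℝ} (hx : 0 < x) (n : ℕ) : 0 < (ascPochhammer ℝ n).eval x := by
  induction n with
  | zero => simp [ascPochhammer_zero]
  | succ n ih =>
      rw [ascPochhammer_succ_eval]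
      have : (0:ℝ) < x + n := by positivity
      positivity

lemma T_succ (α β : ℝ) (hs : 0 < α + β) (n : ℕ) :
    T α β (n + 1) = T α β n *
      ((α + n) * (β + n) * (α + β - 1 + n)) / ((α + β + n) ^ 2 * (n + 1)) := by
  have hP : (0:ℝ) < (ascPochhammer ℝ n).eval (α + β) := poch_pos hs n
  have hf : (0:ℝ) < (n.factorial : ℝ) := by exact_mod_cast n.factorial_pos
  have hsn : (0:ℝ) < α + β + n := by positivity
  simp only [T, ascPochhammer_succ_eval, Nat.factorial_succ, Nat.cast_mul, Nat.cast_add,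
    Nat.cast_one]
  field_simp

/-- Telescoping sum: `∑ 1/((n+3)(n+4)) = 1/3`. -/
lemma hasSum_aux : HasSum (fun n : ℕ => (1:ℝ) / ((n + 3) * (n + 4))) (1/3) := by
  have hnn : ∀ n : ℕ, (0:ℝ) ≤ 1 / ((n + 3) * (n + 4)) := by intro n; positivity
  rw [hasSum_iff_tendsto_nat_of_nonneg hnn]
  have hkey : ∀ n : ℕ, ∑ i ∈ Finset.range n, (1:ℝ) / ((i + 3) * (i + 4))
      = (fun i : ℕ => (1:ℝ) / (i + 3)) 0 - (fun i : ℕ => (1:ℝ) / (i + 3)) n := by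
    intro n
    rw [← Finset.sum_range_sub' (f := fun i : ℕ => (1:ℝ) / (i + 3)) n]
    apply Finset.sum_congr rfl
    intro i _
    have h3 : ((i:ℝ) + 3) ≠ 0 := by positivity
    have h4 : ((i:ℝ) + 1 + 3) ≠ 0 := by positivity
    push_cast
    rw [div_sub_div _ _ h3 h4]
    congr 1 <;> ring
  simp only [hkey]
  have h2 : Filter.Tendsto (fun n : ℕ => ((n:ℝ) + 3)) Filter.atTop Filter.atTop :=
    Filter.tendsto_atTop_add_const_right _ 3 tendsto_natCast_atTop_atTop
  have h0 : Filter.Tendsto (fun n : ℕ => ((n:ℝ) + 3)⁻¹) Filter.atTop (nhds 0) :=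
    h2.inv_tendsto_atTop
  have := (tendsto_const_nhds (x := (fun i : ℕ => (1:ℝ) / (i + 3)) 0)
    (f := Filter.atTop (α := ℕ))).sub h0
  norm_num at this ⊢
  simpa [one_div] using this

/-- Main tail machinery: if `|t 3| * 12 ≤ K` and the weighted absolute values
`|t (n+3)| * ((n+3)(n+4))` are nonincreasing, then `t` is summable and the tail
from index 3 is bounded by `K/3` in absolute value. -/
lemma tail_bound {t : ℕ → ℝ} {K : ℝ} (hK : 0 ≤ K)
    (h3 : |t 3| * (3 * 4) ≤ K)
    (hrec : ∀ n : ℕ,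
      |t (n + 4)| * ((n + 4) * (n + 5)) ≤ |t (n + 3)| * ((n + 3) * (n + 4))) :
    Summable t ∧ |∑' n, t n - (t 0 + t 1 + t 2)| ≤ K / 3 := by
  have hbd : ∀ n : ℕ, |t (n + 3)| ≤ K * (1 / ((n + 3) * (n + 4))) := by
    have hmono : ∀ n : ℕ, |t (n + 3)| * (((n:ℝ) + 3) * ((n:ℝ) + 4)) ≤ K := by
      intro n
      induction n with
      | zero => simpa using h3
      | succ m ih =>
          push_cast
          show |t (m + 4)| * (((m:ℝ) + 1 + 3) * ((m:ℝ) + 1 + 4)) ≤ K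
          have e : (((m:ℝ) + 1 + 3) * ((m:ℝ) + 1 + 4)) = (((m:ℝ) + 4) * ((m:ℝ) + 5)) := by
            ring
          rw [e]
          exact le_trans (hrec m) ih
    intro n
    have hpos : (0:ℝ) < ((n:ℝ) + 3) * ((n:ℝ) + 4) := by positivity
    rw [mul_one_div, le_div_iff₀ hpos]
    exact hmono n
  have hgsum : Summable (fun n : ℕ => K * (1 / (((n:ℝ) + 3) * ((n:ℝ) + 4)))) :=
    (hasSum_aux.mul_left K).summable
  have hsum3 : Summable (fun n : ℕ => t (n + 3)) := by
    apply Summable.of_norm_bounded hgsum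
    intro n
    simpa using hbd n
  have hsum : Summable t := (summable_nat_add_iff 3).mp hsum3
  refine ⟨hsum, ?_⟩
  have hsplit := Summable.sum_add_tsum_nat_add 3 hsum
  have habs : |∑' n, t (n + 3)| ≤ K / 3 := by
    have htsum_g : ∑' n : ℕ, K * (1 / (((n:ℝ) + 3) * ((n:ℝ) + 4))) = K / 3 := by
      rw [(hasSum_aux.mul_left K).tsum_eq]; ring
    have hup : ∑' n, t (n + 3) ≤ K / 3 := by
      rw [← htsum_g]
      exact Summable.tsum_le_tsum (fun n => (le_abs_self _).trans (hbd n)) hsum3 hgsum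
    have hlo : -(K / 3) ≤ ∑' n, t (n + 3) := by
      have h1 : ∀ n : ℕ, -(K * (1 / (((n:ℝ) + 3) * ((n:ℝ) + 4)))) ≤ t (n + 3) := by
        intro n
        have h2 := hbd n
        have h3' := neg_abs_le (t (n + 3))
        linarith
      have := Summable.tsum_le_tsum h1 hgsum.neg hsum3
      rwa [tsum_neg, htsum_g] at this
    exact abs_le.mpr ⟨hlo, hup⟩
  have hfin : ∑ i ∈ Finset.range 3, t i = t 0 + t 1 + t 2 := by
    simp [Finset.sum_range_succ]
  have : ∑' n, t n - (t 0 + t 1 + t 2) = ∑' n, t (n + 3) := by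
    rw [← hsplit, hfin]; ring
  rw [this]; exact habs

lemma poch1 (x : ℝ) : (ascPochhammer ℝ 1).eval x = x := by
  simp [ascPochhammer_one]

lemma poch2 (x : ℝ) : (ascPochhammer ℝ 2).eval x = x * (x + 1) := by
  rw [show (ascPochhammer ℝ 2) = ascPochhammer ℝ (1 + 1) from rfl,
    ascPochhammer_succ_eval, poch1]
  norm_num

lemma poch3 (x : ℝ) : (ascPochhammer ℝ 3).eval x = x * (x + 1) * (x + 2) := by
  rw [show (ascPochhammer ℝ 3) = ascPochhammer ℝ (2 + 1) from rfl,
    ascPochhammer_succ_eval, poch2]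
  norm_num

/-- Transfer a term recurrence into the weighted-absolute-value inequality. -/
lemma abs_step {t s X Y A B : ℝ} (h : t = s * X / Y) (hX : 0 ≤ X) (hY : 0 < Y)
    (key : X * A ≤ Y * B) (hA : 0 ≤ A) : |t| * A ≤ |s| * B := by
  have hdiv : X / Y * A ≤ B := by
    rw [div_mul_eq_mul_div, div_le_iff₀ hY]
    nlinarith
  calc |t| * A = |s| * (X / Y * A) := by
        rw [h, abs_div, abs_mul, abs_of_nonneg hX, abs_of_nonneg hY.le]; ring
    _ ≤ |s| * B := mul_le_mul_of_nonneg_left hdiv (abs_nonneg s)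

lemma cast_add3 (n : ℕ) : ((n + 3 : ℕ) : ℝ) = (n : ℝ) + 3 := by push_cast; ring

lemma hrec1 (n : ℕ) : |T (1/2) (1/3) (n + 4)| * (((n:ℝ) + 4) * ((n:ℝ) + 5))
    ≤ |T (1/2) (1/3) (n + 3)| * (((n:ℝ) + 3) * ((n:ℝ) + 4)) := by
  have h := T_succ (1/2) (1/3) (by norm_num) (n + 3)
  rw [cast_add3] at h
  have hn : (0:ℝ) ≤ (n : ℝ) := Nat.cast_nonneg n
  refine abs_step h ?_ ?_ ?_ (by positivity)
  · have f1 : (0:ℝ) ≤ 1/2 + ((n:ℝ) + 3) := by linarith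
    have f2 : (0:ℝ) ≤ 1/3 + ((n:ℝ) + 3) := by linarith
    have f3 : (0:ℝ) ≤ 1/2 + 1/3 - 1 + ((n:ℝ) + 3) := by linarith
    exact mul_nonneg (mul_nonneg f1 f2) f3
  · positivity
  · nlinarith [sq_nonneg ((n:ℝ)), sq_nonneg ((n:ℝ)+3)]

lemma hrec2 (n : ℕ) : |T (1/2) (2/3) (n + 4)| * (((n:ℝ) + 4) * ((n:ℝ) + 5))
    ≤ |T (1/2) (2/3) (n + 3)| * (((n:ℝ) + 3) * ((n:ℝ) + 4)) := by
  have h := T_succ (1/2) (2/3) (by norm_num) (n + 3)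
  rw [cast_add3] at h
  have hn : (0:ℝ) ≤ (n : ℝ) := Nat.cast_nonneg n
  refine abs_step h ?_ ?_ ?_ (by positivity)
  · have f1 : (0:ℝ) ≤ 1/2 + ((n:ℝ) + 3) := by linarith
    have f2 : (0:ℝ) ≤ 2/3 + ((n:ℝ) + 3) := by linarith
    have f3 : (0:ℝ) ≤ 1/2 + 2/3 - 1 + ((n:ℝ) + 3) := by linarith
    exact mul_nonneg (mul_nonneg f1 f2) f3
  · positivity
  · nlinarith [sq_nonneg ((n:ℝ)), sq_nonneg ((n:ℝ)+3)]

lemma t1_vals : T (1/2) (1/3) 0 = 1 ∧ T (1/2) (1/3) 1 = -(1/25) ∧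
    T (1/2) (1/3) 2 = -(6/605) ∧ |T (1/2) (1/3) 3| * (3 * 4) ≤ 168/3179 := by
  refine ⟨?_, ?_, ?_, ?_⟩
  · simp [T, Nat.factorial]
  · norm_num [T, poch1, Nat.factorial]
  · norm_num [T, poch2, Nat.factorial]
  · have : T (1/2) (1/3) 3 = -(14/3179) := by norm_num [T, poch3, Nat.factorial]
    rw [this, abs_neg, abs_of_nonneg (by norm_num : (0:ℝ) ≤ 14/3179)]
    norm_num

lemma t2_vals : T (1/2) (2/3) 0 = 1 ∧ T (1/2) (2/3) 1 = 2/49 ∧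
    T (1/2) (2/3) 2 = 15/1183 ∧ |T (1/2) (2/3) 3| * (3 * 4) ≤ 2400/32851 := by
  refine ⟨?_, ?_, ?_, ?_⟩
  · simp [T, Nat.factorial]
  · norm_num [T, poch1, Nat.factorial]
  · norm_num [T, poch2, Nat.factorial]
  · have : T (1/2) (2/3) 3 = 200/32851 := by norm_num [T, poch3, Nat.factorial]
    rw [this, abs_of_nonneg (by norm_num : (0:ℝ) ≤ 200/32851)]
    norm_num

lemma S1_bound : 0.932 ≤ ∑' n, T (1/2) (1/3) n := by
  obtain ⟨h0, h1, h2, h3⟩ := t1_vals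
  obtain ⟨-, habs⟩ := tail_bound (by norm_num : (0:ℝ) ≤ 168/3179) h3 hrec1
  rw [h0, h1, h2] at habs
  have := abs_le.mp habs
  have hlo := this.1
  norm_num at hlo ⊢
  linarith

lemma S2_bounds : 0 ≤ ∑' n, T (1/2) (2/3) n ∧ ∑' n, T (1/2) (2/3) n ≤ 1.078 := by
  obtain ⟨h0, h1, h2, h3⟩ := t2_vals
  obtain ⟨-, habs⟩ := tail_bound (by norm_num : (0:ℝ) ≤ 2400/32851) h3 hrec2
  rw [h0, h1, h2] at habs
  have := abs_le.mp habs
  constructor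
  · nlinarith [this.1]
  · nlinarith [this.2]

lemma gamma_13_23 : Gamma (1/3) * Gamma (2/3) = 2 * π / Real.sqrt 3 := by
  have h := Real.Gamma_mul_Gamma_one_sub (1/3)
  have h1 : (1 : ℝ) - 1/3 = 2/3 := by norm_num
  have h2 : π * (1/3) = π / 3 := by ring
  rw [h1, h2, Real.sin_pi_div_three] at h
  rw [h]
  rw [div_div_eq_mul_div, div_eq_div_iff (by positivity) (by positivity)]
  ring

lemma gamma_16_56 : Gamma (1/6) * Gamma (5/6) = 2 * π := by
  have h := Real.Gamma_mul_Gamma_one_sub (1/6)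
  have h1 : (1 : ℝ) - 1/6 = 5/6 := by norm_num
  have h2 : π * (1/6) = π / 6 := by ring
  rw [h1, h2, Real.sin_pi_div_six] at h
  rw [h]
  ring

lemma gamma_76 : Gamma (7/6) = π / (3 * Gamma (5/6)) := by
  have h56 : (0:ℝ) < Gamma (5/6) := Gamma_pos_of_pos (by norm_num)
  have h : Gamma (7/6) = (1/6) * Gamma (1/6) := by
    rw [show (7/6 : ℝ) = 1/6 + 1 by norm_num, Real.Gamma_add_one (by norm_num)]
  have h16 : Gamma (1/6) = 2 * π / Gamma (5/6) := by
    rw [eq_div_iff h56.ne']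
    exact gamma_16_56
  rw [h, h16]
  field_simp
  ring

lemma log_gamma_23 : Real.log (Gamma (2/3)) ≤ (1/3) * Real.log π := by
  have h := Real.convexOn_log_Gamma.2 (Set.mem_Ioi.mpr (by norm_num : (0:ℝ) < 1/2))
    (Set.mem_Ioi.mpr (by norm_num : (0:ℝ) < 1))
    (by norm_num : (0:ℝ) ≤ 2/3) (by norm_num : (0:ℝ) ≤ 1/3) (by norm_num)
  simp only [smul_eq_mul, Function.comp_apply] at h
  rw [show (2/3 : ℝ) * (1/2) + (1/3) * 1 = 2/3 by norm_num] at h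
  rw [Real.Gamma_one, Real.log_one, Real.Gamma_one_half_eq,
    Real.log_sqrt pi_pos.le] at h
  linarith

lemma log_gamma_56 : Real.log (Gamma (5/6)) ≤ (1/6) * Real.log π := by
  have h := Real.convexOn_log_Gamma.2 (Set.mem_Ioi.mpr (by norm_num : (0:ℝ) < 1/2))
    (Set.mem_Ioi.mpr (by norm_num : (0:ℝ) < 1))
    (by norm_num : (0:ℝ) ≤ 1/3) (by norm_num : (0:ℝ) ≤ 2/3) (by norm_num)
  simp only [smul_eq_mul, Function.comp_apply] at h
  rw [show (1/3 : ℝ) * (1/2) + (2/3) * 1 = 5/6 by norm_num] at h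
  rw [Real.Gamma_one, Real.log_one, Real.Gamma_one_half_eq,
    Real.log_sqrt pi_pos.le] at h
  linarith

lemma U_le_pi : (Gamma (2/3) * Gamma (5/6)) ^ 2 ≤ π := by
  have ha : (0:ℝ) < Gamma (2/3) := Gamma_pos_of_pos (by norm_num)
  have hb : (0:ℝ) < Gamma (5/6) := Gamma_pos_of_pos (by norm_num)
  have hU : (0:ℝ) < (Gamma (2/3) * Gamma (5/6)) ^ 2 := by positivity
  have hlog : Real.log ((Gamma (2/3) * Gamma (5/6)) ^ 2) ≤ Real.log π := by
    rw [Real.log_pow, Real.log_mul ha.ne' hb.ne']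
    push_cast
    nlinarith [log_gamma_23, log_gamma_56]
  calc (Gamma (2/3) * Gamma (5/6)) ^ 2
      = Real.exp (Real.log ((Gamma (2/3) * Gamma (5/6)) ^ 2)) := (Real.exp_log hU).symm
    _ ≤ Real.exp (Real.log π) := Real.exp_le_exp.mpr hlog
    _ = π := Real.exp_log pi_pos

lemma C1_sq : (Gamma (1/2) * Gamma (1/3) / Gamma (5/6)) ^ 2
    = 4 * π ^ 3 / (3 * (Gamma (2/3) * Gamma (5/6)) ^ 2) := by
  have ha : (0:ℝ) < Gamma (2/3) := Gamma_pos_of_pos (by norm_num)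
  have hb : (0:ℝ) < Gamma (5/6) := Gamma_pos_of_pos (by norm_num)
  have h13 : Gamma (1/3) = 2 * π / (Real.sqrt 3 * Gamma (2/3)) := by
    rw [eq_div_iff (by positivity : Real.sqrt 3 * Gamma (2/3) ≠ 0)]
    rw [show Gamma (1/3) * (Real.sqrt 3 * Gamma (2/3))
        = Gamma (1/3) * Gamma (2/3) * Real.sqrt 3 by ring, gamma_13_23,
      div_mul_cancel₀ _ (by positivity : Real.sqrt 3 ≠ 0)]
  have hsq3 : Real.sqrt 3 ^ 2 = 3 := Real.sq_sqrt (by norm_num)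
  have hhalf : Gamma (1/2) ^ 2 = π := by
    rw [Real.Gamma_one_half_eq, Real.sq_sqrt pi_pos.le]
  have expand : (Gamma (1/2) * (2 * π / (Real.sqrt 3 * Gamma (2/3))) / Gamma (5/6)) ^ 2
      = Gamma (1/2) ^ 2 * (2 * π) ^ 2
        / (Real.sqrt 3 ^ 2 * Gamma (2/3) ^ 2 * Gamma (5/6) ^ 2) := by
    rw [div_pow, mul_pow, div_pow, mul_pow]
    ring
  rw [h13, expand, hhalf, hsq3]
  rw [div_eq_div_iff (by positivity) (by positivity)]
  ring

lemma C2_sq : (Gamma (1/2) * Gamma (2/3) / Gamma (7/6)) ^ 2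
    = 9 * (Gamma (2/3) * Gamma (5/6)) ^ 2 / π := by
  have hb : (0:ℝ) < Gamma (5/6) := Gamma_pos_of_pos (by norm_num)
  have hhalf : Gamma (1/2) ^ 2 = π := by
    rw [Real.Gamma_one_half_eq, Real.sq_sqrt pi_pos.le]
  rw [gamma_76, div_pow, mul_pow, hhalf, div_pow, mul_pow]
  rw [div_div_eq_mul_div]
  field_simp
  ring

end FtildeAux


open FtildeAux in
/-- `F̃(1/2, 1/3) > F̃(1/2, 2/3)`; in particular the difference appearing in the
evaluation of `L*(E₃₆, 0)` is positive. -/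
theorem Ftilde_half_third_gt : Ftilde (1/2) (1/3) > Ftilde (1/2) (2/3) := by
  rw [Ftilde_eq, Ftilde_eq, show (1/2 + 1/3 : ℝ) = 5/6 by norm_num,
    show (1/2 + 2/3 : ℝ) = 7/6 by norm_num, C1_sq, C2_sq]
  have hU : (0:ℝ) < (Gamma (2/3) * Gamma (5/6)) ^ 2 := by
    have ha : (0:ℝ) < Gamma (2/3) := Gamma_pos_of_pos (by norm_num)
    have hb : (0:ℝ) < Gamma (5/6) := Gamma_pos_of_pos (by norm_num)
    positivity
  set U : ℝ := (Gamma (2/3) * Gamma (5/6)) ^ 2 with hUdef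
  have hUπ : U ≤ π := U_le_pi
  have hS1 := S1_bound
  obtain ⟨hS2n, hS2⟩ := S2_bounds
  set S1 : ℝ := ∑' n, T (1/2) (1/3) n
  set S2 : ℝ := ∑' n, T (1/2) (2/3) n
  have hπ : (3.141592 : ℝ) < π := pi_gt_d6
  have hπ0 : (0:ℝ) < π := pi_pos
  -- lower bound for the first product
  have h1 : 4 * π ^ 2 / 3 * 0.932 ≤ 4 * π ^ 3 / (3 * U) * S1 := by
    have hstep : 4 * π ^ 2 / 3 ≤ 4 * π ^ 3 / (3 * U) := by
      rw [div_le_div_iff₀ (by norm_num) (by positivity)]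
      nlinarith
    have h0932 : (0:ℝ) ≤ 0.932 := by norm_num
    calc 4 * π ^ 2 / 3 * 0.932 ≤ 4 * π ^ 3 / (3 * U) * 0.932 :=
          mul_le_mul_of_nonneg_right hstep h0932
      _ ≤ 4 * π ^ 3 / (3 * U) * S1 :=
          mul_le_mul_of_nonneg_left hS1 (by positivity)
  -- upper bound for the second product
  have h2 : 9 * U / π * S2 ≤ 9 * 1.078 := by
    have hUS : U * S2 ≤ π * 1.078 := by nlinarith
    rw [div_mul_eq_mul_div, div_le_iff₀ hπ0]
    nlinarith
  have h3 : 9 * (1.078 : ℝ) < 4 * π ^ 2 / 3 * 0.932 := by nlinarith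
  linarith
end

section
/- Let ζ = e^{2πi/6} and consider the automorphism g of the function field ℚ(ζ)(x, y) of the Fermat sextic x^6 + y^6 = 1 given by g(x) = ζ^2 x, g(y) = ζ^3 y = -y. Then g fixes the subfield generated by u = -y^2 and v = x^3, g has order 6, and the field extension ℚ(ζ)(x,y)/ℚ(ζ)(u,v) has degree 6 with cyclic Galois group generated by g. -/
open IntermediateField Module

set_option maxHeartbeats 1000000 in
/-- Let `F = K(x, y)` be the function field of the Fermat sextic `x⁶ + y⁶ = 1`
over `K = ℚ(ζ)`, `ζ` a primitive sixth root of unity, and let `g` be the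
automorphism with `g(x) = ζ²x`, `g(y) = ζ³y = -y`. Then `g` fixes `u = -y²` and
`v = x³`, has order 6, and `F/K(u,v)` is a degree-6 extension whose (cyclic)
Galois group is generated by `g`, i.e. `K(u,v)` is the fixed field of `⟨g⟩`. -/
theorem fermat_sextic_galois_over_E36
    (K : Type*) [Field K] (ζ : K) (hζ : IsPrimitiveRoot ζ 6)
    (F : Type*) [Field F] [Algebra K F] (x y : F)
    (hrel : x ^ 6 + y ^ 6 = 1)
    (htrans : Transcendental K x)
    (hgen : IntermediateField.adjoin K {x, y} = ⊤)
    (g : F ≃ₐ[K] F)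
    (hgx : g x = algebraMap K F ζ ^ 2 * x)
    (hgy : g y = -y) :
    g (-(y ^ 2)) = -(y ^ 2) ∧ g (x ^ 3) = x ^ 3 ∧
    orderOf g = 6 ∧
    Module.finrank (IntermediateField.adjoin K {-(y ^ 2), x ^ 3}) F = 6 ∧
    IntermediateField.fixedField (Subgroup.zpowers g)
      = IntermediateField.adjoin K {-(y ^ 2), x ^ 3} := by
  have hinj : Function.Injective (algebraMap K F) := (algebraMap K F).injective
  set a : F := algebraMap K F ζ with ha
  have ha6 : a ^ 6 = 1 := by
    rw [ha, ← map_pow, hζ.pow_eq_one, map_one]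
  -- x ≠ 0, y ≠ 0
  have hx0 : x ≠ 0 := fun h => htrans ⟨Polynomial.X, Polynomial.X_ne_zero, by simp [h]⟩
  have hy0 : y ≠ 0 := by
    intro h
    apply htrans
    refine ⟨Polynomial.X ^ 6 - 1, ?_, ?_⟩
    · simpa using Polynomial.X_pow_sub_C_ne_zero (n := 6) (by norm_num) (1 : K)
    · have hx6 : x ^ 6 = 1 := by rw [← hrel, h]; ring
      simp [hx6]
  -- -1 ≠ 1 in F
  have hζ3 : ζ ^ 3 = -1 := by
    rcases mul_self_eq_one_iff.mp
        (show ζ ^ 3 * ζ ^ 3 = 1 by rw [← pow_add]; exact hζ.pow_eq_one) with h | h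
    · exact absurd h (hζ.pow_ne_one_of_pos_of_lt (by norm_num) (by norm_num))
    · exact h
  have hne : (-1 : F) ≠ 1 := by
    intro h
    apply hζ.pow_ne_one_of_pos_of_lt (l := 3) (by norm_num) (by norm_num)
    rw [hζ3]
    apply hinj
    simpa using h
  -- g fixes u and v
  have hgu : g (-(y ^ 2)) = -(y ^ 2) := by
    rw [map_neg, map_pow, hgy]; ring
  have hgv : g (x ^ 3) = x ^ 3 := by
    rw [map_pow, hgx]
    have h1 : (a ^ 2 * x) ^ 3 = a ^ 6 * x ^ 3 := by ring
    rw [h1, ha6, one_mul]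
  refine ⟨hgu, hgv, ?_⟩
  have mul_app : ∀ (p q : F ≃ₐ[K] F) (z : F), (p * q) z = p (q z) := fun _ _ _ => rfl
  -- powers of g on x and y
  have hga : g a = a := g.commutes ζ
  have hg2a : (g ^ 2) a = a := by rw [pow_two, mul_app, hga, hga]
  have hg2x : (g ^ 2) x = a ^ 4 * x := by
    rw [pow_two, mul_app, hgx, map_mul, map_pow, hga, hgx]; ring
  have hg3x : (g ^ 3) x = x := by
    rw [show (3 : ℕ) = 2 + 1 from rfl, pow_add, pow_one, mul_app, hgx,
      map_mul, map_pow, hg2a, hg2x, ← mul_assoc, ← pow_add, ha6, one_mul]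
  have hg2y : (g ^ 2) y = y := by
    rw [pow_two, mul_app, hgy, map_neg, hgy, neg_neg]
  have hg3y : (g ^ 3) y = -y := by
    rw [show (3 : ℕ) = 1 + 2 from rfl, pow_add, pow_one, mul_app, hg2y, hgy]
  have hg6x : (g ^ 6) x = x := by
    rw [show (6 : ℕ) = 3 + 3 from rfl, pow_add, mul_app, hg3x, hg3x]
  have hg6y : (g ^ 6) y = y := by
    rw [show (6 : ℕ) = 3 + 3 from rfl, pow_add, mul_app, hg3y, map_neg, hg3y, neg_neg]
  -- elements fixed by h are fixed by all of ⟨h⟩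
  have stab : ∀ (h : F ≃ₐ[K] F) (z : F), h z = z →
      ∀ σ : Subgroup.zpowers h, (σ : F ≃ₐ[K] F) z = z := by
    intro h z hz σ
    have hms : h ∈ MulAction.stabilizer (F ≃ₐ[K] F) z := by
      rw [MulAction.mem_stabilizer_iff]
      exact hz
    have := Subgroup.zpowers_le.mpr hms σ.2
    rwa [MulAction.mem_stabilizer_iff] at this
  have memfix : ∀ (h : F ≃ₐ[K] F) (z : F), h z = z →
      z ∈ IntermediateField.fixedField (Subgroup.zpowers h) := by
    intro h z hz σ
    exact stab h z hz σ
  -- a general lemma: an automorphism fixing x and y is the identity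
  have key : ∀ h : F ≃ₐ[K] F, h x = x → h y = y → h = 1 := by
    intro h hx hy
    have hsub : IntermediateField.adjoin K {x, y} ≤
        IntermediateField.fixedField (Subgroup.zpowers h) := by
      rw [IntermediateField.adjoin_le_iff]
      intro z hzmem
      simp only [Set.mem_insert_iff, Set.mem_singleton_iff] at hzmem
      rcases hzmem with rfl | rfl
      · exact memfix h z hx
      · exact memfix h z hy
    rw [hgen, top_le_iff] at hsub
    ext z
    have hz : z ∈ IntermediateField.fixedField (Subgroup.zpowers h) := by
      rw [hsub]; trivial
    exact hz ⟨h, Subgroup.mem_zpowers h⟩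
  have hg6 : g ^ 6 = 1 := key _ hg6x hg6y
  -- g^2 ≠ 1 and g^3 ≠ 1
  have hg2ne : g ^ 2 ≠ 1 := by
    intro h
    have hax : a ^ 4 * x = x := by rw [← hg2x, h]; rfl
    have h4 : a ^ 4 = 1 := by
      have := mul_right_cancel₀ hx0 (hax.trans (one_mul x).symm)
      exact this
    apply hζ.pow_ne_one_of_pos_of_lt (l := 4) (by norm_num) (by norm_num)
    apply hinj
    rw [map_pow, ← ha, h4, map_one]
  have hg3ne : g ^ 3 ≠ 1 := by
    intro h
    have hyy : -y = y := by rw [← hg3y, h]; rfl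
    apply hne
    exact mul_right_cancel₀ hy0 (by rw [neg_one_mul, one_mul]; exact hyy)
  have horder : orderOf g = 6 := by
    apply orderOf_eq_of_pow_and_pow_div_prime (by norm_num) hg6
    intro p hp hpd
    have hple : p ≤ 6 := Nat.le_of_dvd (by norm_num) hpd
    have hp2 : 2 ≤ p := hp.two_le
    interval_cases p
    · simpa using hg3ne
    · simpa using hg2ne
    · exact absurd hp (by norm_num)
    · exact absurd hpd (by norm_num)
    · exact absurd hp (by norm_num)
  refine ⟨horder, ?_⟩
  -- the fixed field has degree 6
  have hfinord : IsOfFinOrder g := by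
    rw [← orderOf_pos_iff, horder]; norm_num
  have : Finite (Subgroup.zpowers g) := hfinord.finite_zpowers
  have hfix6 : finrank (IntermediateField.fixedField (Subgroup.zpowers g)) F = 6 := by
    have := Fintype.ofFinite (Subgroup.zpowers g)
    have h1 : finrank (IntermediateField.fixedField (Subgroup.zpowers g)) F =
        Fintype.card (Subgroup.zpowers g) := FixedPoints.finrank_eq_card _ F
    rw [h1, ← Nat.card_eq_fintype_card, Nat.card_zpowers, horder]
  -- E := K(u, v)
  set E : IntermediateField K F := IntermediateField.adjoin K {-(y ^ 2), x ^ 3} with hE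
  -- E is contained in the fixed field
  have hle : E ≤ IntermediateField.fixedField (Subgroup.zpowers g) := by
    rw [hE, IntermediateField.adjoin_le_iff]
    intro z hzmem
    simp only [Set.mem_insert_iff, Set.mem_singleton_iff] at hzmem
    rcases hzmem with rfl | rfl
    · exact memfix g _ hgu
    · exact memfix g _ hgv
  -- x is integral of degree ≤ 3 over E, y of degree ≤ 2 over E(x)
  have hvE : x ^ 3 ∈ E := IntermediateField.subset_adjoin _ _ (by right; rfl)
  have huE : -(y ^ 2) ∈ E := IntermediateField.subset_adjoin _ _ (by left; rfl)
  set Ex : IntermediateField E F := IntermediateField.adjoin E {x} with hEx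
  have haev : Polynomial.aeval x
      (Polynomial.X ^ 3 - Polynomial.C (⟨x ^ 3, hvE⟩ : E)) = 0 := by
    rw [map_sub, map_pow, Polynomial.aeval_X, Polynomial.aeval_C,
      IntermediateField.algebraMap_apply]
    exact sub_self _
  have hxint : IsIntegral E x :=
    ⟨Polynomial.X ^ 3 - Polynomial.C (⟨x ^ 3, hvE⟩ : E),
      Polynomial.monic_X_pow_sub_C _ (by norm_num), by
        simpa [Polynomial.aeval_def] using haev⟩
  have hfdEx : FiniteDimensional E Ex := IntermediateField.adjoin.finiteDimensional hxint
  have hdx : finrank E Ex ≤ 3 := by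
    rw [hEx, IntermediateField.adjoin.finrank hxint]
    have hdeg := minpoly.degree_le_of_ne_zero E x
      (Polynomial.monic_X_pow_sub_C (⟨x ^ 3, hvE⟩ : E) (by norm_num : (3:ℕ) ≠ 0)).ne_zero haev
    calc (minpoly E x).natDegree
        ≤ (Polynomial.X ^ 3 - Polynomial.C (⟨x ^ 3, hvE⟩ : E)).natDegree :=
          Polynomial.natDegree_le_natDegree hdeg
      _ = 3 := Polynomial.natDegree_X_pow_sub_C
  -- y over Ex
  have huEx : y ^ 2 ∈ Ex := by
    have h1 : -(y ^ 2) ∈ Ex := by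
      simpa [IntermediateField.algebraMap_apply] using
        Ex.algebraMap_mem (⟨-(y ^ 2), huE⟩ : E)
    simpa using neg_mem h1
  have haevy : Polynomial.aeval y
      (Polynomial.X ^ 2 - Polynomial.C (⟨y ^ 2, huEx⟩ : Ex)) = 0 := by
    rw [map_sub, map_pow, Polynomial.aeval_X, Polynomial.aeval_C,
      IntermediateField.algebraMap_apply]
    exact sub_self _
  have hyint : IsIntegral Ex y :=
    ⟨Polynomial.X ^ 2 - Polynomial.C (⟨y ^ 2, huEx⟩ : Ex),
      Polynomial.monic_X_pow_sub_C _ (by norm_num), by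
        simpa [Polynomial.aeval_def] using haevy⟩
  set Exy : IntermediateField Ex F := IntermediateField.adjoin Ex {y} with hExy
  have hfdExy : FiniteDimensional Ex Exy := IntermediateField.adjoin.finiteDimensional hyint
  have hdy : finrank Ex Exy ≤ 2 := by
    rw [hExy, IntermediateField.adjoin.finrank hyint]
    have hdeg := minpoly.degree_le_of_ne_zero Ex y
      (Polynomial.monic_X_pow_sub_C (⟨y ^ 2, huEx⟩ : Ex) (by norm_num : (2:ℕ) ≠ 0)).ne_zero haevy
    calc (minpoly Ex y).natDegree
        ≤ (Polynomial.X ^ 2 - Polynomial.C (⟨y ^ 2, huEx⟩ : Ex)).natDegree :=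
          Polynomial.natDegree_le_natDegree hdeg
      _ = 2 := Polynomial.natDegree_X_pow_sub_C
  -- Exy = ⊤
  have htopE : IntermediateField.adjoin E ({x, y} : Set F) = ⊤ :=
    IntermediateField.restrictScalars_injective K (by
      rw [IntermediateField.restrictScalars_adjoin_eq_sup, hgen, sup_top_eq,
        IntermediateField.restrictScalars_top])
  have htop : Exy = ⊤ := by
    apply IntermediateField.restrictScalars_injective E
    rw [hExy, hEx, IntermediateField.adjoin_adjoin_left, IntermediateField.restrictScalars_top]
    rw [show ({x} ∪ {y} : Set F) = {x, y} from rfl]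
    exact htopE
  have hfdExF : FiniteDimensional Ex F := by
    have e : Exy ≃ₗ[Ex] F := by
      rw [htop]; exact IntermediateField.topEquiv.toLinearEquiv
    exact Module.Finite.equiv e
  have hdyF : finrank Ex F ≤ 2 := by
    have e : Exy ≃ₗ[Ex] F := by
      rw [htop]; exact IntermediateField.topEquiv.toLinearEquiv
    rw [← e.finrank_eq]; exact hdy
  have hfdEF : FiniteDimensional E F := FiniteDimensional.trans E Ex F
  have hdEF : finrank E F ≤ 6 := by
    rw [← Module.finrank_mul_finrank E Ex F]
    calc finrank E Ex * finrank Ex F ≤ 3 * 2 := Nat.mul_le_mul hdx hdyF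
      _ = 6 := rfl
  -- conclude
  have heq : E = IntermediateField.fixedField (Subgroup.zpowers g) :=
    IntermediateField.eq_of_le_of_finrank_le' hle (by rw [hfix6]; exact hdEF)
  refine ⟨?_, heq.symm⟩
  rw [heq]
  exact hfix6
end
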